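/- arXiv:2112.13973 — 3 statements merged into one kernel-verified Lean document; each statement's English description precedes it below -/
import Mathlib

section
/- Uniform boundedness of solutions of the quasilinear discrete PDE: let φ : ℝ → ℝ be strictly increasing and continuous, f : ℝ → ℝ continuous with u·f(u) < 0 for |u| large, and K > 0. Suppose u₋ < u₊ satisfy f(u₋) > 0, f(u₊) < 0, and u₋ < uᴺ(0, x/N) < u₊ for all x. Then the solution of ∂_t u = Δᴺ φ(u) + K f(u) on (1/N)(ℤ/Nℤ)ⁿ satisfies u₋ ≤ uᴺ(t, x/N) ≤ u₊ for all t ≥ 0 and all x. -/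
/-!
If `u` ever exceeded `u₊`, take the barrier `u₊ + ε (1 + t)` and the first time `T` at which
`maxₓ u(t, x)` reaches it, at a site `x₀`. Then `u(T, ·)` is maximal at `x₀`, so
`Δᴺ φ(u)(x₀) ≤ 0` by monotonicity of `φ`, and `f(u(T, x₀)) < 0` since `u(T, x₀)` is close to `u₊`.
Hence `∂ₜ u(T, x₀) ≤ 0 < ε`, which contradicts `u(·, x₀)` having reached the barrier from below.
Letting `ε → 0` gives `u ≤ u₊`; the lower bound is symmetric.
-/

open Finset

/-- Embed an integer vector into the discrete torus `(ℤ/Nℤ)ⁿ`. -/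
def castVec {n N : ℕ} (e : Fin n → ℤ) : Fin n → ZMod N := fun j => (e j : ZMod N)

/-- Forward discrete derivative `∇ᴺ_e f(x/N) = N (f((x+e)/N) - f(x/N))`. -/
def dgrad {n N : ℕ} (e : Fin n → ℤ) (f : (Fin n → ZMod N) → ℝ) (x : Fin n → ZMod N) : ℝ :=
  (N : ℝ) * (f (x + castVec e) - f x)

/-- Backward discrete derivative `∇ᴺ*_e f(x/N) = N (f((x-e)/N) - f(x/N))`. -/
def dgradStar {n N : ℕ} (e : Fin n → ℤ) (f : (Fin n → ZMod N) → ℝ) (x : Fin n → ZMod N) : ℝ :=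
  (N : ℝ) * (f (x - castVec e) - f x)

/-- `e ∈ ℤⁿ` is a unit vector (`|e| = 1`). -/
def IsUnitVec {n : ℕ} (e : Fin n → ℤ) : Prop :=
  ∃ i, (e i = 1 ∨ e i = -1) ∧ ∀ j, j ≠ i → e j = 0

/-- The discrete Laplacian `Δᴺ v(x/N) = N² Σ_{|e|=1} (v((x+e)/N) - v(x/N))`. -/
def dLap {n N : ℕ} (f : (Fin n → ZMod N) → ℝ) (x : Fin n → ZMod N) : ℝ :=
  (N : ℝ) ^ 2 * ∑ i : Fin n,
    ((f (x + castVec (Pi.single i 1)) - f x)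
      + (f (x - castVec (Pi.single i 1)) - f x))

open Set Filter Topology

theorem exists_first_zero {f : ℝ → ℝ} {a b : ℝ} (hab : a ≤ b) (hf : ContinuousOn f (Icc a b))
    (ha : f a < 0) (hb : 0 ≤ f b) : ∃ T ∈ Ioc a b, f T = 0 ∧ ∀ s ∈ Ico a T, f s < 0 := by
  set S := Icc a b ∩ f ⁻¹' Ici 0
  have hS : IsClosed S := hf.preimage_isClosed_of_isClosed isClosed_Icc isClosed_Ici
  have hSbdd : BddBelow S := ⟨a, fun s hs => hs.1.1⟩
  have hTS : sInf S ∈ S := hS.csInf_mem ⟨b, ⟨hab, le_rfl⟩, hb⟩ hSbdd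
  have hbefore : ∀ s ∈ Ico a (sInf S), f s < 0 := fun s hs => by
    by_contra! h
    exact (csInf_le hSbdd ⟨⟨hs.1, hs.2.le.trans hTS.1.2⟩, h⟩).not_gt hs.2
  have haT : a < sInf S := lt_of_le_of_ne hTS.1.1 fun h => (h ▸ hTS.2 : 0 ≤ f a).not_gt ha
  obtain ⟨s, hs, hfs⟩ := intermediate_value_Icc hTS.1.1 (hf.mono (Icc_subset_Icc_right hTS.1.2))
    (mem_Icc.mpr ⟨ha.le, hTS.2⟩)
  have hsT : s = sInf S := hs.2.eq_of_not_lt fun h => (hbefore s ⟨hs.1, h⟩).ne hfs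
  exact ⟨sInf S, ⟨haT, hTS.1.2⟩, hsT ▸ hfs, hbefore⟩

theorem HasDerivAt.nonneg_of_isMaxFilter_nhdsLT {g : ℝ → ℝ} {g' T : ℝ} (hg : HasDerivAt g g' T)
    (hmax : IsMaxFilter g (𝓝[<] T) T) : 0 ≤ g' := by
  refine ge_of_tendsto ((hasDerivWithinAt_iff_tendsto_slope' (s := Iio T) (lt_irrefl T)).mp
    hg.hasDerivWithinAt) ?_
  filter_upwards [hmax, self_mem_nhdsWithin] with s hs hsT
  rw [slope_def_field]
  exact div_nonneg_of_nonpos (sub_nonpos.mpr hs) (sub_nonpos.mpr (le_of_lt hsT))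

section Barrier

variable {ι : Type*} [Fintype ι]

theorem lt_barrier_of_deriv_nonpos_at_isMaxOn (u u' : ℝ → ι → ℝ)
    (hu : ∀ x, ∀ t, 0 ≤ t → HasDerivAt (fun s => u s x) (u' t x) t) {b c : ℝ}
    (hmax : ∀ t, 0 ≤ t → ∀ x, IsMaxOn (u t) univ x → u t x ∈ Icc b c → u' t x ≤ 0)
    (h0 : ∀ x, u 0 x ≤ b) {ε : ℝ} (hε : 0 < ε) {t : ℝ} (ht : 0 ≤ t) (hεc : ε * (1 + t) ≤ c - b)
    (x : ι) : u t x < b + ε * (1 + t) := by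
  have : Nonempty ι := ⟨x⟩
  by_contra! hreach
  -- the `1 +` keeps the barrier strictly above `u 0`, so the first touching time is positive
  set excess : ℝ → ι → ℝ := fun s y => u s y - (b + ε * (1 + s))
  have hexcess : ∀ y, ∀ s, 0 ≤ s → HasDerivAt (fun s => excess s y) (u' s y - ε) s :=
    fun y s hs =>
      ((hu y s hs).sub ((((hasDerivAt_id s).const_add 1).const_mul ε).const_add b)).congr_deriv
        (by rw [mul_one])
  obtain ⟨T, hT, hzero, hneg⟩ := exists_first_zero
    (f := fun s => Finset.univ.sup' Finset.univ_nonempty (excess s)) ht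
    (ContinuousOn.finset_sup'_apply _ fun y _ s hs =>
      (hexcess y s hs.1).continuousAt.continuousWithinAt)
    ((Finset.sup'_lt_iff _).2 fun y _ => by simp only [excess]; nlinarith [h0 y])
    (Finset.le_sup'_of_le _ (Finset.mem_univ x) (by simp only [excess]; linarith))
  obtain ⟨x₀, -, hx₀⟩ := Finset.exists_mem_eq_sup' Finset.univ_nonempty (excess T)
  have htouch : u T x₀ = b + ε * (1 + T) := by
    have := hx₀.symm.trans hzero
    simp only [excess] at this
    linarith
  have hmaxT : IsMaxOn (u T) univ x₀ := isMaxOn_univ_iff.2 fun y => by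
    have := hx₀ ▸ Finset.le_sup' (excess T) (Finset.mem_univ y)
    simp only [excess] at this
    linarith
  have hbT : u T x₀ ∈ Icc b c := by
    rw [htouch]
    constructor <;> nlinarith [hT.1, hT.2]
  have hfirst : IsMaxFilter (fun s => excess s x₀) (𝓝[<] T) T := by
    filter_upwards [Ioo_mem_nhdsLT hT.1] with s hs
    have := (Finset.le_sup' (excess s) (Finset.mem_univ x₀)).trans (hneg s ⟨hs.1.le, hs.2⟩).le
    simpa [← hx₀, hzero] using this
  linarith [hmax T hT.1.le x₀ hmaxT hbT,
    (hexcess x₀ T hT.1.le).nonneg_of_isMaxFilter_nhdsLT hfirst]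

theorem le_of_deriv_nonpos_at_isMaxOn (u u' : ℝ → ι → ℝ)
    (hu : ∀ x, ∀ t, 0 ≤ t → HasDerivAt (fun s => u s x) (u' t x) t) {b c : ℝ} (hbc : b < c)
    (hmax : ∀ t, 0 ≤ t → ∀ x, IsMaxOn (u t) univ x → u t x ∈ Icc b c → u' t x ≤ 0)
    (h0 : ∀ x, u 0 x ≤ b) {t : ℝ} (ht : 0 ≤ t) (x : ι) : u t x ≤ b := by
  refine le_of_forall_pos_lt_add fun η hη => ?_
  have ht1 : 0 < 1 + t := by linarith
  set ε := min η (c - b) / (1 + t)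
  have hε : ε * (1 + t) = min η (c - b) := div_mul_cancel₀ _ ht1.ne'
  calc u t x < b + ε * (1 + t) :=
        lt_barrier_of_deriv_nonpos_at_isMaxOn u u' hu hmax h0
          (div_pos (lt_min hη (sub_pos.2 hbc)) ht1) ht (hε.trans_le (min_le_right _ _)) x
    _ ≤ b + η := by rw [hε]; linarith [min_le_left η (c - b)]

theorem ge_of_deriv_nonneg_at_isMinOn (u u' : ℝ → ι → ℝ)
    (hu : ∀ x, ∀ t, 0 ≤ t → HasDerivAt (fun s => u s x) (u' t x) t) {b c : ℝ} (hcb : c < b)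
    (hmin : ∀ t, 0 ≤ t → ∀ x, IsMinOn (u t) univ x → u t x ∈ Icc c b → 0 ≤ u' t x)
    (h0 : ∀ x, b ≤ u 0 x) {t : ℝ} (ht : 0 ≤ t) (x : ι) : b ≤ u t x := by
  have hneg := le_of_deriv_nonpos_at_isMaxOn (fun s y => -u s y) (fun s y => -u' s y)
    (fun y s hs => (hu y s hs).neg) (neg_lt_neg hcb)
    (fun s hs y hy hI => neg_nonpos.2 <| hmin s hs y (by simpa using hy.neg)
      ⟨by linarith [hI.2], by linarith [hI.1]⟩)
    (fun y => neg_le_neg (h0 y)) ht x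
  linarith

end Barrier

section Laplacian

variable {n N : ℕ} {g : (Fin n → ZMod N) → ℝ} {x : Fin n → ZMod N}

theorem dLap_nonpos_of_isMaxOn (h : IsMaxOn g univ x) : dLap g x ≤ 0 :=
  mul_nonpos_of_nonneg_of_nonpos (sq_nonneg _) <| Finset.sum_nonpos fun _ _ =>
    add_nonpos (sub_nonpos.2 (h (mem_univ _))) (sub_nonpos.2 (h (mem_univ _)))

theorem dLap_nonneg_of_isMinOn (h : IsMinOn g univ x) : 0 ≤ dLap g x :=
  mul_nonneg (sq_nonneg _) <| Finset.sum_nonneg fun _ _ =>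
    add_nonneg (sub_nonneg.2 (h (mem_univ _))) (sub_nonneg.2 (h (mem_univ _)))

theorem dLap_of_modulus_zero (g : (Fin n → ZMod 0) → ℝ) (x : Fin n → ZMod 0) : dLap g x = 0 := by
  simp [dLap]

end Laplacian

theorem stmt10_general {n : ℕ} (N : ℕ) (φ f : ℝ → ℝ) (K : ℝ)
    (hφmono : StrictMono φ) (hfcont : Continuous f)
    (hK : 0 < K) (um up : ℝ) (hfm : 0 < f um) (hfp : f up < 0)
    (u : ℝ → (Fin n → ZMod N) → ℝ)
    (hu : ∀ x, ∀ t : ℝ, 0 ≤ t →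
      HasDerivAt (fun s => u s x) (dLap (fun y => φ (u t y)) x + K * f (u t x)) t)
    (h0 : ∀ x, u 0 x ∈ Set.Ioo um up) :
    ∀ t : ℝ, 0 ≤ t → ∀ x, u t x ∈ Set.Icc um up := by
  obtain ⟨up', hup', hfup⟩ : ∃ c, up < c ∧ Icc up c ⊆ {v | f v < 0} :=
    mem_nhdsGE_iff_exists_Icc_subset.1 <| nhdsWithin_le_nhds <|
      hfcont.continuousAt.eventually_lt continuousAt_const hfp
  obtain ⟨um', hum', hfum⟩ : ∃ c, c < um ∧ Icc c um ⊆ {v | 0 < f v} :=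
    mem_nhdsLE_iff_exists_Icc_subset.1 <| nhdsWithin_le_nhds <|
      continuousAt_const.eventually_lt hfcont.continuousAt hfm
  intro t ht x
  rcases N.eq_zero_or_pos with rfl | hN
  · -- `ZMod 0 = ℤ`, so the lattice is infinite; but `dLap` carries the factor `N² = 0`,
    -- so each site solves `u' = K f(u)` on its own.
    have hx : ∀ s, 0 ≤ s → HasDerivAt (fun r => u r x) (K * f (u s x)) s := fun s hs => by
      simpa [dLap_of_modulus_zero] using hu x s hs
    exact ⟨ge_of_deriv_nonneg_at_isMinOn (ι := Unit) (fun s _ => u s x) (fun s _ => K * f (u s x))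
        (fun _ => hx) hum' (fun _ _ _ _ hI => (mul_pos hK (hfum hI)).le)
        (fun _ => (h0 x).1.le) ht (),
      le_of_deriv_nonpos_at_isMaxOn (ι := Unit) (fun s _ => u s x) (fun s _ => K * f (u s x))
        (fun _ => hx) hup' (fun _ _ _ _ hI => (mul_neg_of_pos_of_neg hK (hfup hI)).le)
        (fun _ => (h0 x).2.le) ht ()⟩
  · have : NeZero N := ⟨hN.ne'⟩
    exact ⟨ge_of_deriv_nonneg_at_isMinOn u _ hu hum'
        (fun _ _ _ hmin hI => add_nonneg (dLap_nonneg_of_isMinOn (hmin.comp_mono hφmono.monotone))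
          (mul_pos hK (hfum hI)).le) (fun y => (h0 y).1.le) ht x,
      le_of_deriv_nonpos_at_isMaxOn u _ hu hup'
        (fun _ _ _ hmax hI => add_nonpos (dLap_nonpos_of_isMaxOn (hmax.comp_mono hφmono.monotone))
          (mul_neg_of_pos_of_neg hK (hfup hI)).le) (fun y => (h0 y).2.le) ht x⟩

/-- Uniform boundedness (1.2) of solutions of the quasilinear discrete PDE
`∂_t u = Δᴺ φ(u) + K f(u)` (Section 2.5). -/
theorem stmt10 {n : ℕ} (N : ℕ) (φ f : ℝ → ℝ) (K : ℝ)
    (hφmono : StrictMono φ) (hφcont : Continuous φ) (hfcont : Continuous f)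
    (hsign : ∃ M : ℝ, ∀ v : ℝ, M ≤ |v| → v * f v < 0)
    (hK : 0 < K) (um up : ℝ) (hfm : 0 < f um) (hfp : f up < 0)
    (u : ℝ → (Fin n → ZMod N) → ℝ)
    (hu : ∀ x, ∀ t : ℝ, 0 ≤ t →
      HasDerivAt (fun s => u s x) (dLap (fun y => φ (u t y)) x + K * f (u t x)) t)
    (h0 : ∀ x, u 0 x ∈ Set.Ioo um up) :
    ∀ t : ℝ, 0 ≤ t → ∀ x, u t x ∈ Set.Icc um up :=
  stmt10_general N φ f K hφmono hfcont hK um up hfm hfp u hu h0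
end

section
/- Interpolation inequality for discrete gradients: let α ∈ (0,1), Ω = [0,T] × Tⁿ, and let u : Ω → ℝ. Define the discrete derivative ∇ᴺ_e u(t,z) = N(u(t, z+e/N) − u(t,z)), the oscillation [u]₀ = osc_Ω u, the weighted seminorm [u]*_{1+α} = sup_{X≠Y} (d(X)∧d(Y))^{1+α} |∇ᴺu(X) − ∇ᴺu(Y)|/|X−Y|^α with d((t,z)) = √t and parabolic distance |X−Y| = max(|t−s|^{1/2}, |z−y|), and U₁ = sup_X d(X)·max_e |∇ᴺ_e u(X)|. Then U₁ ≤ 3·[u]₀^{α/(1+α)}·([u]₀ + [u]*_{1+α})^{1/(1+α)}. -/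
open Finset

/-- Euclidean distance on the continuous torus `Tⁿ = (ℝ/ℤ)ⁿ`. -/
noncomputable def torusDist {n : ℕ} (z y : Fin n → AddCircle (1 : ℝ)) : ℝ :=
  Real.sqrt (∑ i : Fin n, (dist (z i) (y i)) ^ 2)

/-- Parabolic distance `|X - Y| = max(|t-s|^{1/2}, |z-y|)` on `ℝ × Tⁿ`. -/
noncomputable def parDist {n : ℕ} (X Y : ℝ × (Fin n → AddCircle (1 : ℝ))) : ℝ :=
  max (Real.sqrt |X.1 - Y.1|) (torusDist X.2 Y.2)

/-- Parabolic distance to the boundary `{t = 0}`: `d(X) = √t`. -/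
noncomputable def dWeight {n : ℕ} (X : ℝ × (Fin n → AddCircle (1 : ℝ))) : ℝ :=
  Real.sqrt X.1

/-- Shift of a torus point by `e_i / N`. -/
noncomputable def shiftC {n : ℕ} (N : ℕ) (i : Fin n)
    (z : Fin n → AddCircle (1 : ℝ)) : Fin n → AddCircle (1 : ℝ) :=
  Function.update z i (z i + (((N : ℝ)⁻¹ : ℝ) : AddCircle (1 : ℝ)))

/-- Discrete derivative `∇ᴺ_{e_i} u(t,z) = N (u(t, z + e_i/N) - u(t,z))` of a
function on `Ω = [0,T] × Tⁿ`. -/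
noncomputable def cgrad {n : ℕ} (N : ℕ) (i : Fin n)
    (u : ℝ × (Fin n → AddCircle (1 : ℝ)) → ℝ)
    (X : ℝ × (Fin n → AddCircle (1 : ℝ))) : ℝ :=
  (N : ℝ) * (u (X.1, shiftC N i X.2) - u X)

/-!
Along the lattice path `z, z + e/N, …, z + m e/N` the discrete derivatives telescope to
`N (u(z + m e/N) - u(z))`, so `m ∇ᴺu(z)` is at most `N [u]₀` plus `m` times the variation of
`∇ᴺu` over distance `m/N`, which at time `t` is at most `[u]*_{1+α} (m/N)^α / √t^(1+α)`.
Hence `√t |∇ᴺu| ≤ [u]₀ / s + [u]*_{1+α} s^α` for every grid step `s = m / (N √t)`. Taking `s`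
within a factor `2` of `θ = ([u]₀ / ([u]₀ + [u]*_{1+α}))^(1/(1+α))`, where the two terms
balance, or using `|∇ᴺu| ≤ N [u]₀` when the grid is coarser than `θ`, gives the bound.
-/

section

variable {n : ℕ} (N : ℕ) (i : Fin n) (u : ℝ × (Fin n → AddCircle (1 : ℝ)) → ℝ)

lemma shiftC_iterate (z : Fin n → AddCircle (1 : ℝ)) (k : ℕ) :
    (shiftC N i)^[k] z = Function.update z i (z i + ((k / N : ℝ) : AddCircle (1 : ℝ))) := by
  induction k with
  | zero => simp
  | succ k ih =>
    rw [Function.iterate_succ_apply', ih, shiftC, Function.update_self, Function.update_idem,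
      add_assoc, ← AddCircle.coe_add]
    push_cast
    rw [add_div, one_div]

lemma torusDist_update (z : Fin n → AddCircle (1 : ℝ)) (w : AddCircle (1 : ℝ)) :
    torusDist z (Function.update z i w) = dist (z i) w := by
  rw [torusDist, Fintype.sum_eq_single i fun j hj => by simp [Function.update_of_ne hj],
    Function.update_self, Real.sqrt_sq dist_nonneg]

lemma torusDist_shiftC_iterate_le (z : Fin n → AddCircle (1 : ℝ)) (k : ℕ) :
    torusDist z ((shiftC N i)^[k] z) ≤ k / N := by
  rw [shiftC_iterate, torusDist_update, dist_self_add_right]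
  calc ‖((k / N : ℝ) : AddCircle (1 : ℝ))‖ ≤ ‖(k / N : ℝ)‖ := QuotientAddGroup.norm_mk_le_norm
    _ = k / N := by rw [Real.norm_of_nonneg (by positivity)]

lemma parDist_mk_mk_same_fst (t : ℝ) (z w : Fin n → AddCircle (1 : ℝ)) :
    parDist (t, z) (t, w) = torusDist z w := by
  simp only [parDist, sub_self, abs_zero, Real.sqrt_zero]
  exact max_eq_right (Real.sqrt_nonneg _)

lemma abs_cgrad_le (X : ℝ × (Fin n → AddCircle (1 : ℝ))) {K : ℝ}
    (h : |u (X.1, shiftC N i X.2) - u X| ≤ K) :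
    |cgrad N i u X| ≤ N * K := by
  rw [cgrad, abs_mul, Nat.abs_cast]
  exact mul_le_mul_of_nonneg_left h N.cast_nonneg

lemma sum_range_cgrad_shiftC_iterate (t : ℝ) (z : Fin n → AddCircle (1 : ℝ)) (m : ℕ) :
    ∑ k ∈ range m, cgrad N i u (t, (shiftC N i)^[k] z)
      = N * (u (t, (shiftC N i)^[m] z) - u (t, z)) := by
  simp only [cgrad, ← mul_sum, ← Function.iterate_succ_apply' (shiftC N i)]
  rw [sum_range_sub (fun k => u (t, (shiftC N i)^[k] z)), Function.iterate_zero_apply]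

lemma nat_mul_abs_cgrad_le {t D K₀ K₁ α : ℝ} (hD : 0 ≤ D) (hK₁ : 0 ≤ K₁) (hα : 0 ≤ α)
    (hosc : ∀ w w', |u (t, w) - u (t, w')| ≤ K₀)
    (hsemi : ∀ w w', w ≠ w' →
      D * |cgrad N i u (t, w) - cgrad N i u (t, w')| ≤ K₁ * torusDist w w' ^ α)
    (z : Fin n → AddCircle (1 : ℝ)) (m : ℕ) :
    m * (D * |cgrad N i u (t, z)|) ≤ N * D * K₀ + m * (K₁ * (m / N) ^ α) := by
  set g := fun k : ℕ => cgrad N i u (t, (shiftC N i)^[k] z)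
  have hterm : ∀ k ∈ range m, D * |g 0 - g k| ≤ K₁ * (m / N) ^ α := by
    intro k hk
    by_cases hz : z = (shiftC N i)^[k] z
    · simp only [g, ← hz, Function.iterate_zero_apply, sub_self, abs_zero, mul_zero]
      positivity
    refine (hsemi _ _ hz).trans (mul_le_mul_of_nonneg_left ?_ hK₁)
    refine Real.rpow_le_rpow (Real.sqrt_nonneg _)
      ((torusDist_shiftC_iterate_le N i z k).trans ?_) hα
    gcongr
    exact (mem_range.mp hk).le
  have htelescope : (m : ℝ) * g 0 = N * (u (t, (shiftC N i)^[m] z) - u (t, z))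
      + ∑ k ∈ range m, (g 0 - g k) := by
    rw [sum_sub_distrib, sum_range_cgrad_shiftC_iterate, sum_const, card_range, nsmul_eq_mul]
    ring
  calc (m : ℝ) * (D * |cgrad N i u (t, z)|) = D * |(m : ℝ) * g 0| := by
        simp only [g, abs_mul, Nat.abs_cast, Function.iterate_zero_apply]; ring
    _ ≤ D * (N * |u (t, (shiftC N i)^[m] z) - u (t, z)|
          + ∑ k ∈ range m, |g 0 - g k|) := by
        rw [htelescope]
        gcongr
        refine (abs_add_le _ _).trans (add_le_add ?_ (abs_sum_le_sum_abs _ _))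
        rw [abs_mul, Nat.abs_cast]
    _ ≤ N * D * K₀ + m * (K₁ * (m / N) ^ α) := by
        rw [mul_add, mul_sum, mul_left_comm, mul_assoc]
        refine add_le_add (mul_le_mul_of_nonneg_left ?_ N.cast_nonneg) ?_
        · exact mul_le_mul_of_nonneg_left (hosc _ _) hD
        · simpa using sum_le_sum hterm

lemma sqrt_mul_abs_cgrad_le {t K₀ K₁ α : ℝ} (hd : 0 < √t) (hK₁ : 0 ≤ K₁) (hα : 0 ≤ α)
    (hosc : ∀ w w', |u (t, w) - u (t, w')| ≤ K₀)
    (hsemi : ∀ w w', w ≠ w' →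
      √t ^ (1 + α) * |cgrad N i u (t, w) - cgrad N i u (t, w')| ≤ K₁ * torusDist w w' ^ α)
    (z : Fin n → AddCircle (1 : ℝ)) {m : ℕ} (hm : 0 < m) :
    √t * |cgrad N i u (t, z)| ≤ N * √t * K₀ / m + K₁ * (m / (N * √t)) ^ α := by
  have key := nat_mul_abs_cgrad_le N i u (by positivity) hK₁ hα hosc hsemi z m
  have hdα : 0 < √t ^ α := by positivity
  rw [Real.rpow_add hd, Real.rpow_one] at key
  rw [← div_div, Real.div_rpow (by positivity) hd.le, mul_div_assoc',
    div_add_div _ _ (by positivity) hdα.ne', le_div_iff₀ (by positivity)]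
  linarith

end

lemma le_div_add_two_mul_rpow_of_forall_nat {a c K₀ K₁ α θ : ℝ} (hc : 0 < c) (hK₀ : 0 ≤ K₀)
    (hK₁ : 0 ≤ K₁) (hα0 : 0 ≤ α) (hα1 : α ≤ 1) (hθ : 0 < θ) (hcoarse : a ≤ c * K₀)
    (hstep : ∀ m : ℕ, 0 < m → a ≤ c * K₀ / m + K₁ * (m / c) ^ α) :
    a ≤ K₀ / θ + 2 * (K₁ * θ ^ α) := by
  rcases le_or_gt (c * θ) 1 with hsmall | hlarge
  · calc a ≤ c * K₀ := hcoarse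
      _ ≤ K₀ / θ := by rw [le_div_iff₀ hθ]; nlinarith
      _ ≤ K₀ / θ + 2 * (K₁ * θ ^ α) := le_add_of_nonneg_right (by positivity)
  -- `m / c` is the first grid point `≥ θ`; it is `< 2 θ` because the grid is finer than `θ`
  set m := ⌈c * θ⌉₊
  have hm_ge : c * θ ≤ m := Nat.le_ceil _
  have hm_lt : (m : ℝ) < c * θ + 1 := Nat.ceil_lt_add_one (by positivity)
  have hm_pos : 0 < m := by exact_mod_cast (by linarith : (0 : ℝ) < m)
  have hs_ge : θ ≤ m / c := by rw [le_div_iff₀ hc]; linarith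
  have hs_le : m / c ≤ 2 * θ := by rw [div_le_iff₀ hc]; linarith
  calc a ≤ c * K₀ / m + K₁ * (m / c) ^ α := hstep m hm_pos
    _ = K₀ / (m / c) + K₁ * (m / c) ^ α := by field_simp
    _ ≤ K₀ / θ + K₁ * (2 * θ) ^ α := by gcongr
    _ ≤ K₀ / θ + 2 * (K₁ * θ ^ α) := by
        rw [Real.mul_rpow zero_le_two hθ.le, mul_left_comm]
        gcongr
        exact Real.rpow_le_self_of_one_le one_le_two hα1

lemma exists_div_add_two_mul_rpow_le {K₀ K₁ α : ℝ} (hK₀ : 0 < K₀) (hK₁ : 0 ≤ K₁) (hα : 0 ≤ α) :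
    ∃ θ > 0, K₀ / θ + 2 * (K₁ * θ ^ α)
      ≤ 3 * K₀ ^ (α / (1 + α)) * (K₀ + K₁) ^ (1 / (1 + α)) := by
  have hS : 0 < K₀ + K₁ := by linarith
  have h1α : 1 + α ≠ 0 := by positivity
  set θ := (K₀ / (K₀ + K₁)) ^ (1 + α)⁻¹ with hθ_def
  have hθ : 0 < θ := by positivity
  -- `θ ^ (1 + α) = K₀ / (K₀ + K₁)` makes `K₀ / θ = (K₀ + K₁) θ ^ α`
  have hθ_pow : θ ^ (1 + α) = K₀ / (K₀ + K₁) := Real.rpow_inv_rpow (by positivity) h1α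
  have hfirst : K₀ / θ = K₀ ^ (α / (1 + α)) * (K₀ + K₁) ^ (1 / (1 + α)) := by
    have hexp : α / (1 + α) = 1 - (1 + α)⁻¹ := by field_simp; ring
    rw [hθ_def, Real.div_rpow hK₀.le hS.le, div_div_eq_mul_div, mul_div_right_comm, hexp,
      Real.rpow_sub hK₀, Real.rpow_one, one_div]
  have hsecond : K₁ * θ ^ α ≤ K₀ / θ := by
    calc K₁ * θ ^ α ≤ (K₀ + K₁) * θ ^ α := by gcongr; linarith
      _ = (K₀ + K₁) * θ ^ (1 + α) / θ := by
        rw [Real.rpow_add hθ, Real.rpow_one]; field_simp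
      _ = K₀ / θ := by rw [hθ_pow, mul_div_cancel₀ _ hS.ne']
  exact ⟨θ, hθ, by linarith⟩

/-- `K₀` and `K₁` stand for `[u]₀` and `[u]*_{1+α}`. -/
theorem stmt12_general {n : ℕ} (N : ℕ) (T α : ℝ) (hα0 : 0 < α) (hα1 : α < 1)
    (u : ℝ × (Fin n → AddCircle (1 : ℝ)) → ℝ) (K₀ K₁ : ℝ)
    (hK₀ : 0 ≤ K₀) (hK₁ : 0 ≤ K₁)
    (hosc : ∀ X Y : ℝ × (Fin n → AddCircle (1 : ℝ)),
      X.1 ∈ Set.Icc (0 : ℝ) T → Y.1 ∈ Set.Icc (0 : ℝ) T → |u X - u Y| ≤ K₀)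
    (hsemi : ∀ X Y : ℝ × (Fin n → AddCircle (1 : ℝ)),
      X.1 ∈ Set.Icc (0 : ℝ) T → Y.1 ∈ Set.Icc (0 : ℝ) T → X ≠ Y → ∀ i : Fin n,
      (min (dWeight X) (dWeight Y)) ^ (1 + α) * |cgrad N i u X - cgrad N i u Y|
        ≤ K₁ * (parDist X Y) ^ α) :
    ∀ X : ℝ × (Fin n → AddCircle (1 : ℝ)), X.1 ∈ Set.Icc (0 : ℝ) T → ∀ i : Fin n,
      dWeight X * |cgrad N i u X|
        ≤ 3 * K₀ ^ (α / (1 + α)) * (K₀ + K₁) ^ (1 / (1 + α)) := by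
  rintro ⟨t, z⟩ hX i
  have hosc_t : ∀ w w', |u (t, w) - u (t, w')| ≤ K₀ := fun w w' => hosc _ _ hX hX
  have hsemi_t : ∀ w w', w ≠ w' →
      √t ^ (1 + α) * |cgrad N i u (t, w) - cgrad N i u (t, w')| ≤ K₁ * torusDist w w' ^ α := by
    intro w w' hw
    simpa [dWeight, parDist_mk_mk_same_fst] using hsemi (t, w) (t, w') hX hX (by simpa using hw) i
  have hcoarse : √t * |cgrad N i u (t, z)| ≤ N * √t * K₀ := by
    rw [mul_comm (N : ℝ), mul_assoc]
    exact mul_le_mul_of_nonneg_left (abs_cgrad_le N i u _ (hosc_t _ _)) (Real.sqrt_nonneg t)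
  simp only [dWeight]
  rcases (by positivity : 0 ≤ (N : ℝ) * √t * K₀).eq_or_lt with hzero | hpos
  · have : 0 ≤ 3 * K₀ ^ (α / (1 + α)) * (K₀ + K₁) ^ (1 / (1 + α)) := by positivity
    linarith
  have hc : 0 < (N : ℝ) * √t := pos_of_mul_pos_left hpos hK₀
  have hd : 0 < √t := pos_of_mul_pos_right hc N.cast_nonneg
  obtain ⟨θ, hθ, hθ_le⟩ :=
    exists_div_add_two_mul_rpow_le (pos_of_mul_pos_right hpos hc.le) hK₁ hα0.le
  refine (le_div_add_two_mul_rpow_of_forall_nat hc hK₀ hK₁ hα0.le hα1.le hθ hcoarse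
    fun m hm => ?_).trans hθ_le
  exact sqrt_mul_abs_cgrad_le N i u hd hK₁ hα0.le hosc_t hsemi_t z hm

/-- Interpolation inequality (4.18) of Proposition 4.5:
`U₁ ≤ 3 [u]₀^{α/(1+α)} ([u]₀ + [u]*_{1+α})^{1/(1+α)}`, stated in terms of
bounds `K₀` on the oscillation `[u]₀` and `K₁` on the weighted seminorm
`[u]*_{1+α}`. -/
theorem stmt12 {n : ℕ} (N : ℕ) (T α : ℝ) (hα0 : 0 < α) (hα1 : α < 1) (hT : 0 < T)
    (u : ℝ × (Fin n → AddCircle (1 : ℝ)) → ℝ) (K₀ K₁ : ℝ)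
    (hK₀ : 0 ≤ K₀) (hK₁ : 0 ≤ K₁)
    (hosc : ∀ X Y : ℝ × (Fin n → AddCircle (1 : ℝ)),
      X.1 ∈ Set.Icc (0 : ℝ) T → Y.1 ∈ Set.Icc (0 : ℝ) T → |u X - u Y| ≤ K₀)
    (hsemi : ∀ X Y : ℝ × (Fin n → AddCircle (1 : ℝ)),
      X.1 ∈ Set.Icc (0 : ℝ) T → Y.1 ∈ Set.Icc (0 : ℝ) T → X ≠ Y → ∀ i : Fin n,
      (min (dWeight X) (dWeight Y)) ^ (1 + α) * |cgrad N i u X - cgrad N i u Y|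
        ≤ K₁ * (parDist X Y) ^ α) :
    ∀ X : ℝ × (Fin n → AddCircle (1 : ℝ)), X.1 ∈ Set.Icc (0 : ℝ) T → ∀ i : Fin n,
      dWeight X * |cgrad N i u X|
        ≤ 3 * K₀ ^ (α / (1 + α)) * (K₀ + K₁) ^ (1 / (1 + α)) :=
  stmt12_general N T α hα0 hα1 u K₀ K₁ hK₀ hK₁ hosc hsemi
end

section
/- The interpolation commutes with discrete differentiation: for any function F on (ℤ/Nℤ)ⁿ and unit vector e, the polylinear interpolation of ∇ᴺ_e F equals ∇ᴺ_e applied to the polylinear interpolation of F, i.e., (∇ᴺ_e F)~(z) = N(F̃(z + e/N) − F̃(z)) for all z ∈ Tⁿ. -/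
open Finset

/-- One-dimensional interpolation weight: `θᴺ(1,b) = {Nb}`, `θᴺ(0,b) = 1 - {Nb}`
(`{·}` the fractional part). -/
noncomputable def interpWeight (N : ℕ) (b : Bool) (s : ℝ) : ℝ :=
  if b then Int.fract ((N : ℝ) * s) else 1 - Int.fract ((N : ℝ) * s)

/-- The polylinear interpolation
`ũᴺ(z) = Σ_{v ∈ {0,1}ⁿ} θᴺ(v,z) uᴺ((⌊Nz⌋+v)/N)` of a function on the
discrete torus. -/
noncomputable def interp {n N : ℕ} (u : (Fin n → ZMod N) → ℝ) (z : Fin n → ℝ) : ℝ :=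
  ∑ v : Fin n → Bool,
    (∏ i : Fin n, interpWeight N (v i) (z i)) *
      u fun i => ((⌊(N : ℝ) * z i⌋ + (if v i then 1 else 0) : ℤ) : ZMod N)

/-! Shifting `z` by a lattice vector `e / N` moves `N z` by the integer vector `e`, which leaves
the fractional parts, hence the weights `θᴺ(v, z)`, unchanged and moves `⌊N z⌋` by `e`. So the
interpolation of `F` at `z + e / N` is the interpolation of the translate `F (· + e)` at `z`, and
the claim follows from linearity of `u ↦ ũ`. -/

lemma natCast_mul_add_intCast_div {N : ℕ} (hN : (N : ℝ) ≠ 0) (s : ℝ) (k : ℤ) :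
    (N : ℝ) * (s + k / N) = N * s + k := by
  field_simp

lemma interpWeight_add_intCast_div {N : ℕ} (hN : (N : ℝ) ≠ 0) (b : Bool) (s : ℝ) (k : ℤ) :
    interpWeight N b (s + k / N) = interpWeight N b s := by
  simp only [interpWeight, natCast_mul_add_intCast_div hN, Int.fract_add_intCast]

lemma interp_add_intCast_div {n N : ℕ} (hN : (N : ℝ) ≠ 0) (F : (Fin n → ZMod N) → ℝ)
    (e : Fin n → ℤ) (z : Fin n → ℝ) :
    interp F (fun j => z j + e j / N) = interp (fun x => F (x + castVec e)) z := by
  refine sum_congr rfl fun v _ => ?_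
  simp only [interpWeight_add_intCast_div hN]
  congr 2
  funext i
  simp only [natCast_mul_add_intCast_div hN, Int.floor_add_intCast, castVec, Pi.add_apply]
  push_cast
  ring

lemma interp_const_mul_sub {n N : ℕ} (c : ℝ) (f g : (Fin n → ZMod N) → ℝ) (z : Fin n → ℝ) :
    interp (fun x => c * (f x - g x)) z = c * (interp f z - interp g z) := by
  simp only [interp, ← sum_sub_distrib, mul_sum]
  refine sum_congr rfl fun v _ => ?_
  ring

theorem stmt15_general {n N : ℕ} (F : (Fin n → ZMod N) → ℝ) (e : Fin n → ℤ)
    (z : Fin n → ℝ) :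
    interp (dgrad e F) z
      = (N : ℝ) * (interp F (fun j => z j + (e j : ℝ) / (N : ℝ)) - interp F z) := by
  rw [show dgrad e F = fun x => (N : ℝ) * (F (x + castVec e) - F x) from rfl,
    interp_const_mul_sub]
  rcases eq_or_ne (N : ℝ) 0 with hN | hN
  · simp [hN]
  · rw [interp_add_intCast_div hN]

/-- The polylinear interpolation commutes with discrete differentiation, (3.24):
`(∇ᴺ_e F)~(z) = N (F̃(z + e/N) - F̃(z))`. -/
theorem stmt15 {n N : ℕ} (F : (Fin n → ZMod N) → ℝ) (e : Fin n → ℤ)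
    (he : IsUnitVec e) (z : Fin n → ℝ) :
    interp (dgrad e F) z
      = (N : ℝ) * (interp F (fun j => z j + (e j : ℝ) / (N : ℝ)) - interp F z) :=
  stmt15_general F e z
end
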